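/- Let (Ω,d) be a bounded minimally nice metric space whose metric completion Ω̄^d is compact, and suppose (Ω,d) is quasihyperbolically visible. Fix x₀ ∈ Ω and let γ_n : [0,∞) → (Ω,k_Ω) be quasihyperbolic geodesic rays with γ_n(0) = x₀ for all n. If (γ_n) converges uniformly on compact subsets of [0,∞) to a quasihyperbolic geodesic ray γ : [0,∞) → (Ω,k_Ω), then lim_{t→∞} γ(t) = lim_{n→∞} lim_{t→∞} γ_n(t), all limits taken in the metric d. -/

import Mathlib

open Set Filter Metric Topology UniformConvergence ENNReal

noncomputable section

variable {Ω : Type*} [MetricSpace Ω]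

/-- The metric boundary `∂_dΩ` of a metric space `Ω`: the complement of (the image of) `Ω`
in its metric completion `Ω̄^d`. -/
def metricBoundary (Ω : Type*) [MetricSpace Ω] : Set (UniformSpace.Completion Ω) :=
  (Set.range ((↑) : Ω → UniformSpace.Completion Ω))ᶜ

/-- `δ_Ω(z)`: the distance from `z ∈ Ω` to the metric boundary `∂_dΩ`. -/
def deltaOmega (z : Ω) : ℝ :=
  Metric.infDist ((z : UniformSpace.Completion Ω)) (metricBoundary Ω)

/-- A rectifiable curve in `Ω`, defined on `[a,b]`, joining `x` to `y`. -/
def IsCurveIn (γ : ℝ → Ω) (a b : ℝ) (x y : Ω) : Prop :=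
  a ≤ b ∧ ContinuousOn γ (Set.Icc a b) ∧ γ a = x ∧ γ b = y ∧
    eVariationOn γ (Set.Icc a b) ≠ ⊤

/-- The `d`-arclength function `t ↦ ℓ_d(γ|_{[a,t]})` of a curve `γ` on `[a,b]` (clamped). -/
def arcLengthFun (γ : ℝ → Ω) (a b : ℝ) : ℝ → ℝ :=
  fun t => (eVariationOn γ (Set.Icc a (max a (min t b)))).toReal

theorem arcLengthFun_monotone {γ : ℝ → Ω} {a b : ℝ} (hab : a ≤ b)
    (hrect : eVariationOn γ (Set.Icc a b) ≠ ⊤) : Monotone (arcLengthFun γ a b) := by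
  intro s t hst
  apply ENNReal.toReal_mono
  · exact ne_top_of_le_ne_top hrect
      (eVariationOn.mono γ (Set.Icc_subset_Icc_right (max_le hab (min_le_right _ _))))
  · exact eVariationOn.mono γ (Set.Icc_subset_Icc_right
      (max_le_max le_rfl (min_le_min hst le_rfl)))

/-- The quasihyperbolic length `ℓ_k(γ) = ∫_γ |dz| / δ_Ω(z)` of a rectifiable curve
`γ : [a,b] → Ω`: the Lebesgue–Stieltjes integral of `1/δ_Ω(γ(t))` with respect to the
arclength function of `γ`.  (Non-rectifiable "curves" get length `⊤`.) -/
def qhLength (γ : ℝ → Ω) (a b : ℝ) : ℝ≥0∞ :=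
  if h : a ≤ b ∧ eVariationOn γ (Set.Icc a b) ≠ ⊤ then
    ∫⁻ t in Set.Icc a b, ENNReal.ofReal (1 / deltaOmega (γ t))
      ∂(arcLengthFun_monotone h.1 h.2).stieltjesFunction.measure
  else ⊤

/-- The quasihyperbolic distance (as an extended real): the infimum of the quasihyperbolic
lengths of rectifiable curves in `Ω` joining `x` to `y`. -/
def qhEDist (x y : Ω) : ℝ≥0∞ :=
  ⨅ (γ : ℝ → Ω) (a : ℝ) (b : ℝ) (_ : IsCurveIn γ a b x y), qhLength γ a b

/-- The quasihyperbolic metric `k_Ω`. -/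
def qhDist (x y : Ω) : ℝ :=
  (qhEDist x y).toReal

/-- The inner (length) metric `λ_Ω` associated to `(Ω,d)`, as an extended real. -/
def innerEDist (x y : Ω) : ℝ≥0∞ :=
  ⨅ (γ : ℝ → Ω) (a : ℝ) (b : ℝ) (_ : IsCurveIn γ a b x y), eVariationOn γ (Set.Icc a b)

/-- `(Ω,d)` is minimally nice: rectifiably connected, locally compact, non-complete, and the
identity map from `(Ω,d)` to `(Ω,λ_Ω)` is continuous. -/
structure MinimallyNice (Ω : Type*) [MetricSpace Ω] : Prop where
  rectifiablyConnected : ∀ x y : Ω, ∃ (γ : ℝ → Ω) (a b : ℝ), IsCurveIn γ a b x y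
  locallyCompact : LocallyCompactSpace Ω
  nonComplete : ¬ CompleteSpace Ω
  idContinuous : ∀ x : Ω, Filter.Tendsto (fun y => innerEDist x y) (nhds x) (nhds 0)

/-- `γ` is a geodesic of the quasihyperbolic metric on the parameter set `s`
(parametrized by `k_Ω`-arclength). -/
def IsQHGeodesicOn (γ : ℝ → Ω) (s : Set ℝ) : Prop :=
  ∀ ⦃u⦄, u ∈ s → ∀ ⦃v⦄, v ∈ s → qhDist (γ u) (γ v) = |u - v|

/-- A quasihyperbolic geodesic segment from `x` to `y`. -/
def IsQHGeodesicSeg (γ : ℝ → Ω) (a b : ℝ) (x y : Ω) : Prop :=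
  a ≤ b ∧ γ a = x ∧ γ b = y ∧ IsQHGeodesicOn γ (Set.Icc a b)

/-- A quasihyperbolic geodesic ray `γ : [0,∞) → (Ω, k_Ω)`. -/
def IsQHGeodesicRay (γ : ℝ → Ω) : Prop :=
  IsQHGeodesicOn γ (Set.Ici 0)

/-- A quasihyperbolic geodesic line `γ : (-∞,∞) → (Ω, k_Ω)`. -/
def IsQHGeodesicLine (γ : ℝ → Ω) : Prop :=
  IsQHGeodesicOn γ Set.univ

/-- `(Ω,d)` is quasihyperbolically visible: for every pair of distinct points `p,q` of the
metric boundary there is a compact set `K ⊆ Ω` such that for all sequences `xₙ → p`, `yₙ → q`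
(in the metric `d`), every quasihyperbolic geodesic joining `xₙ` and `yₙ` meets `K`. -/
def QHVisible (Ω : Type*) [MetricSpace Ω] : Prop :=
  ∀ p q : UniformSpace.Completion Ω, p ∈ metricBoundary Ω → q ∈ metricBoundary Ω → p ≠ q →
    ∃ K : Set Ω, IsCompact K ∧
      ∀ x y : ℕ → Ω,
        Filter.Tendsto (fun n => ((x n : Ω) : UniformSpace.Completion Ω))
          Filter.atTop (nhds p) →
        Filter.Tendsto (fun n => ((y n : Ω) : UniformSpace.Completion Ω))
          Filter.atTop (nhds q) →
        ∀ (n : ℕ) (γ : ℝ → Ω) (a b : ℝ), IsQHGeodesicSeg γ a b (x n) (y n) →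
          ∃ t ∈ Set.Icc a b, γ t ∈ K

/-- `(Ω, k_Ω)` is Gromov hyperbolic: there is `δ ≥ 0` such that every quasihyperbolic
geodesic triangle is `δ`-thin. -/
def QHGromovHyperbolic (Ω : Type*) [MetricSpace Ω] : Prop :=
  ∃ δ : ℝ, 0 ≤ δ ∧
    ∀ (x y z : Ω) (γ₁ γ₂ γ₃ : ℝ → Ω) (a₁ b₁ a₂ b₂ a₃ b₃ : ℝ),
      IsQHGeodesicSeg γ₁ a₁ b₁ x y → IsQHGeodesicSeg γ₂ a₂ b₂ y z →
      IsQHGeodesicSeg γ₃ a₃ b₃ x z →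
      ∀ t ∈ Set.Icc a₁ b₁,
        ∃ u, (u ∈ Set.Icc a₂ b₂ ∧ qhDist (γ₁ t) (γ₂ u) ≤ δ) ∨
             (u ∈ Set.Icc a₃ b₃ ∧ qhDist (γ₁ t) (γ₃ u) ≤ δ)

/-- `(Ω,d)` is quasiconvex: some `A ≥ 1` so that every two points are joined by a curve of
`d`-length at most `A·d(x,y)`. -/
def QuasiconvexSpace (Ω : Type*) [MetricSpace Ω] : Prop :=
  ∃ A : ℝ, 1 ≤ A ∧ ∀ x y : Ω, ∃ (γ : ℝ → Ω) (a b : ℝ), IsCurveIn γ a b x y ∧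
    eVariationOn γ (Set.Icc a b) ≤ ENNReal.ofReal (A * dist x y)

/-- The Gehring–Hayman theorem holds in `(Ω,d)`: quasihyperbolic geodesics are essentially
the shortest curves, up to a multiplicative constant `C ≥ 1`. -/
def GehringHayman (Ω : Type*) [MetricSpace Ω] : Prop :=
  ∃ C : ℝ, 1 ≤ C ∧ ∀ x y : Ω, ∀ (γ : ℝ → Ω) (a b : ℝ), IsQHGeodesicSeg γ a b x y →
    ∀ (σ : ℝ → Ω) (a' b' : ℝ), IsCurveIn σ a' b' x y →
      eVariationOn γ (Set.Icc a b) ≤ ENNReal.ofReal C * eVariationOn σ (Set.Icc a' b')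

/-!
A quasihyperbolic geodesic ray `γ` lands: it cannot accumulate at a point `z ∈ Ω`, since
`k_Ω(γ 0, ·)` is bounded near `z` while `k_Ω(γ 0, γ t) = t`; and it cannot accumulate at two
boundary points `p ≠ q`, since segments of `γ` running from near `p` to near `q` arbitrarily far
out would all meet the compact set provided by visibility, on which `k_Ω(γ 0, ·)` is bounded.

The same visibility argument applies to segments taken from different rays `γₙ` starting at
`x₀`. If `q'` is a cluster point of the landing points `qₙ`, pick `a` large with `γ a` near `p`;
since `d ≤ diam Ω̄ · k_Ω`, for large `n` the point `γₙ a` is near `p` too, while `γₙ t` tends to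
`qₙ`, which is frequently near `q'`. Hence `q' = p`, and compactness of `Ω̄` gives `qₙ → p`.
-/

open UniformSpace (Completion)
open MeasureTheory

theorem Topology.IsDenseInducing.isOpen_range {X Y : Type*} [TopologicalSpace X]
    [TopologicalSpace Y] [LocallyCompactSpace X] [T2Space Y] {f : X → Y}
    (hf : IsDenseInducing f) : IsOpen (range f) := by
  refine isOpen_iff_forall_mem_open.2 ?_
  rintro _ ⟨x, rfl⟩
  obtain ⟨K, hK, hKx⟩ := exists_compact_mem_nhds x
  rw [hf.nhds_eq_comap] at hKx
  obtain ⟨V, hV, hVK⟩ := mem_comap.1 hKx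
  obtain ⟨U, hUV, hUo, hxU⟩ := mem_nhds_iff.1 hV
  refine ⟨U, ?_, hUo, hxU⟩
  calc U ⊆ closure (U ∩ range f) := hf.dense.open_subset_closure_inter hUo
    _ ⊆ closure (f '' K) := by
      refine closure_mono ?_
      rintro _ ⟨hy, z, rfl⟩
      exact mem_image_of_mem f (hVK (hUV hy))
    _ = f '' K := (hK.image hf.continuous).isClosed.closure_eq
    _ ⊆ range f := image_subset_range f K

theorem isClosed_metricBoundary [LocallyCompactSpace Ω] : IsClosed (metricBoundary Ω) :=
  Completion.isDenseInducing_coe.isOpen_range.isClosed_compl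

theorem metricBoundary_nonempty (h : ¬CompleteSpace Ω) : (metricBoundary Ω).Nonempty := by
  rw [nonempty_iff_ne_empty, metricBoundary, Ne, compl_empty_iff]
  intro hrange
  rw [completeSpace_iff_isComplete_range (Completion.isUniformInducing_coe Ω)] at h
  exact h (hrange ▸ isComplete_univ)

theorem deltaOmega_pos [LocallyCompactSpace Ω] (h : ¬CompleteSpace Ω) (z : Ω) :
    0 < deltaOmega z :=
  (isClosed_metricBoundary.notMem_iff_infDist_pos (metricBoundary_nonempty h)).1
    fun hz => hz (mem_range_self z)

theorem continuous_deltaOmega : Continuous (deltaOmega : Ω → ℝ) :=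
  (continuous_infDist_pt _).comp (Completion.continuous_coe Ω)

theorem deltaOmega_le_add_dist (z w : Ω) : deltaOmega z ≤ deltaOmega w + dist z w := by
  simpa only [deltaOmega, Completion.dist_eq] using
    infDist_le_infDist_add_dist (x := (z : Completion Ω)) (y := w) (s := metricBoundary Ω)

theorem deltaOmega_le_diam [CompactSpace (Completion Ω)] (h : ¬CompleteSpace Ω) (z : Ω) :
    deltaOmega z ≤ diam (univ : Set (Completion Ω)) := by
  obtain ⟨b, hb⟩ := metricBoundary_nonempty h
  exact (infDist_le_dist_of_mem hb).trans
    (dist_le_diam_of_mem isCompact_univ.isBounded trivial trivial)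

theorem IsCurveIn.exists_append {σ₁ σ₂ : ℝ → Ω} {a₁ b₁ a₂ b₂ : ℝ} {x y z : Ω}
    (h₁ : IsCurveIn σ₁ a₁ b₁ x y) (h₂ : IsCurveIn σ₂ a₂ b₂ y z) :
    ∃ (τ : ℝ → Ω) (a b : ℝ), IsCurveIn τ a b x z ∧
      eVariationOn τ (Icc a b) = eVariationOn σ₁ (Icc a₁ b₁) + eVariationOn σ₂ (Icc a₂ b₂) ∧
      τ '' Icc a b ⊆ σ₁ '' Icc a₁ b₁ ∪ σ₂ '' Icc a₂ b₂ := by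
  obtain ⟨hab₁, hσ₁, rfl, rfl, hvar₁⟩ := h₁
  obtain ⟨hab₂, hσ₂, hy, rfl, hvar₂⟩ := h₂
  set c := b₁ + (b₂ - a₂)
  set shift : ℝ → ℝ := fun t => t + (a₂ - b₁)
  set τ : ℝ → Ω := fun t => if t ≤ b₁ then σ₁ t else σ₂ (shift t)
  have hbc : b₁ ≤ c := by linarith
  have hshift : shift '' Icc b₁ c = Icc a₂ b₂ := by
    rw [image_add_const_Icc]; congr 1 <;> ring
  have hτ₁ : EqOn τ σ₁ (Icc a₁ b₁) := fun t ht => if_pos ht.2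
  have hτ₂ : EqOn τ (σ₂ ∘ shift) (Icc b₁ c) := by
    rintro t ⟨hbt, -⟩
    rcases hbt.eq_or_lt with rfl | hlt
    · simp [τ, shift, hy]
    · simp [τ, not_le.2 hlt]
  have hvar : eVariationOn τ (Icc a₁ c) =
      eVariationOn σ₁ (Icc a₁ b₁) + eVariationOn σ₂ (Icc a₂ b₂) := by
    have hsplit := eVariationOn.Icc_add_Icc τ (s := univ) hab₁ hbc (mem_univ b₁)
    simp only [univ_inter] at hsplit
    rw [← hsplit, eVariationOn.eq_of_eqOn hτ₁, eVariationOn.eq_of_eqOn hτ₂,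
      eVariationOn.comp_eq_of_monotoneOn σ₂ shift (fun u _ v _ huv => by simp [shift, huv]),
      hshift]
  refine ⟨τ, a₁, c, ⟨hab₁.trans hbc, ?_, hτ₁ ⟨le_rfl, hab₁⟩, ?_, ?_⟩, hvar, ?_⟩
  · rw [← Icc_union_Icc_eq_Icc hab₁ hbc]
    refine (hσ₁.congr hτ₁).union_of_isClosed (ContinuousOn.congr ?_ hτ₂) isClosed_Icc isClosed_Icc
    exact hσ₂.comp (continuous_add_const _).continuousOn (hshift ▸ mapsTo_image shift _)
  · rw [hτ₂ ⟨hbc, le_rfl⟩, Function.comp_apply]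
    congr 1; ring
  · rw [hvar]; exact ENNReal.add_ne_top.2 ⟨hvar₁, hvar₂⟩
  · rw [← Icc_union_Icc_eq_Icc hab₁ hbc, image_union, hτ₁.image_eq, hτ₂.image_eq, image_comp,
      hshift]

theorem arcLengthFun_of_le {γ : ℝ → Ω} {a b t : ℝ} (h : t ≤ a) : arcLengthFun γ a b t = 0 := by
  rw [arcLengthFun, max_eq_left ((min_le_left t b).trans h), Icc_self,
    eVariationOn.subsingleton γ subsingleton_singleton, ENNReal.toReal_zero]

theorem arcLengthFun_of_ge {γ : ℝ → Ω} {a b t : ℝ} (hab : a ≤ b) (h : b ≤ t) :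
    arcLengthFun γ a b t = (eVariationOn γ (Icc a b)).toReal := by
  rw [arcLengthFun, min_eq_right h, max_eq_right hab]

theorem measure_Icc_arcLength {γ : ℝ → Ω} {a b : ℝ} (hab : a ≤ b)
    (hvar : eVariationOn γ (Icc a b) ≠ ⊤) :
    (arcLengthFun_monotone hab hvar).stieltjesFunction.measure (Icc a b) =
      eVariationOn γ (Icc a b) := by
  set f := (arcLengthFun_monotone hab hvar).stieltjesFunction
  have hfb : f b = (eVariationOn γ (Icc a b)).toReal := by
    refine rightLim_eq_of_tendsto (tendsto_const_nhds.congr' ?_)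
    filter_upwards [self_mem_nhdsWithin] with t ht
    exact (arcLengthFun_of_ge hab (le_of_lt ht)).symm
  have hfa : Function.leftLim f a = 0 := by
    refine leftLim_eq_of_tendsto (tendsto_const_nhds.congr' ?_)
    filter_upwards [self_mem_nhdsWithin] with t ht
    refine (rightLim_eq_of_tendsto (tendsto_const_nhds.congr' ?_)).symm
    filter_upwards [Ioo_mem_nhdsGT_of_mem ⟨le_rfl, ht⟩] with s hs
    exact (arcLengthFun_of_le (le_of_lt hs.2)).symm
  rw [StieltjesFunction.measure_Icc, hfb, hfa, sub_zero, ENNReal.ofReal_toReal hvar]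

theorem qhLength_le_of_le_deltaOmega {γ : ℝ → Ω} {a b m : ℝ} (hab : a ≤ b)
    (hvar : eVariationOn γ (Icc a b) ≠ ⊤) (hm : 0 < m)
    (hδ : ∀ t ∈ Icc a b, m ≤ deltaOmega (γ t)) :
    qhLength γ a b ≤ ENNReal.ofReal (1 / m) * eVariationOn γ (Icc a b) := by
  rw [qhLength, dif_pos ⟨hab, hvar⟩]
  refine (setLIntegral_mono measurable_const fun t ht =>
    ENNReal.ofReal_le_ofReal (one_div_le_one_div_of_le hm (hδ t ht))).trans_eq ?_
  rw [setLIntegral_const, measure_Icc_arcLength hab hvar]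

theorem le_qhLength_of_deltaOmega_le {γ : ℝ → Ω} {a b D : ℝ}
    (hδ : ∀ t ∈ Icc a b, 0 < deltaOmega (γ t) ∧ deltaOmega (γ t) ≤ D) :
    ENNReal.ofReal (1 / D) * eVariationOn γ (Icc a b) ≤ qhLength γ a b := by
  rw [qhLength]
  split_ifs with h
  · refine le_of_eq_of_le ?_ (setLIntegral_mono' measurableSet_Icc fun t ht =>
      ENNReal.ofReal_le_ofReal (one_div_le_one_div_of_le (hδ t ht).1 (hδ t ht).2))
    rw [setLIntegral_const, measure_Icc_arcLength h.1 h.2]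
  · exact le_top

theorem qhEDist_le_qhLength {γ : ℝ → Ω} {a b : ℝ} {x y : Ω} (hc : IsCurveIn γ a b x y) :
    qhEDist x y ≤ qhLength γ a b :=
  iInf_le_of_le γ <| iInf_le_of_le a <| iInf_le_of_le b <| iInf_le _ hc

namespace IsCurveIn

variable {γ : ℝ → Ω} {a b : ℝ} {x y : Ω}

theorem qhEDist_le (hc : IsCurveIn γ a b x y) {m : ℝ} (hm : 0 < m)
    (hδ : ∀ t ∈ Icc a b, m ≤ deltaOmega (γ t)) :
    qhEDist x y ≤ ENNReal.ofReal (1 / m) * eVariationOn γ (Icc a b) :=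
  (qhEDist_le_qhLength hc).trans (qhLength_le_of_le_deltaOmega hc.1 hc.2.2.2.2 hm hδ)

theorem qhEDist_ne_top (hc : IsCurveIn γ a b x y) {m : ℝ} (hm : 0 < m)
    (hδ : ∀ t ∈ Icc a b, m ≤ deltaOmega (γ t)) : qhEDist x y ≠ ⊤ :=
  ne_top_of_le_ne_top (ENNReal.mul_ne_top ENNReal.ofReal_ne_top hc.2.2.2.2) (hc.qhEDist_le hm hδ)

theorem qhDist_le (hc : IsCurveIn γ a b x y) {m : ℝ} (hm : 0 < m)
    (hδ : ∀ t ∈ Icc a b, m ≤ deltaOmega (γ t)) :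
    qhDist x y ≤ (eVariationOn γ (Icc a b)).toReal / m := by
  have h := ENNReal.toReal_mono (ENNReal.mul_ne_top ENNReal.ofReal_ne_top hc.2.2.2.2)
    (hc.qhEDist_le hm hδ)
  rwa [ENNReal.toReal_mul, ENNReal.toReal_ofReal (by positivity), one_div_mul_eq_div] at h

theorem exists_pos_le_deltaOmega [LocallyCompactSpace Ω] (hnc : ¬CompleteSpace Ω)
    (hc : IsCurveIn γ a b x y) : ∃ m > 0, ∀ t ∈ Icc a b, m ≤ deltaOmega (γ t) := by
  obtain ⟨w, hw, hmin⟩ := (isCompact_Icc.image_of_continuousOn hc.2.1).exists_isMinOn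
    ((nonempty_Icc.2 hc.1).image γ) continuous_deltaOmega.continuousOn
  exact ⟨deltaOmega w, deltaOmega_pos hnc w, fun t ht => hmin (mem_image_of_mem γ ht)⟩

end IsCurveIn

namespace MinimallyNice

theorem qhEDist_ne_top (hnice : MinimallyNice Ω) (x y : Ω) : qhEDist x y ≠ ⊤ := by
  obtain ⟨γ, a, b, hc⟩ := hnice.rectifiablyConnected x y
  have := hnice.locallyCompact
  obtain ⟨m, hm, hδ⟩ := hc.exists_pos_le_deltaOmega hnice.nonComplete
  exact hc.qhEDist_ne_top hm hδ

theorem dist_le_diam_mul_qhDist (hnice : MinimallyNice Ω) [CompactSpace (Completion Ω)]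
    (x y : Ω) : dist x y ≤ diam (univ : Set (Completion Ω)) * qhDist x y := by
  set D := diam (univ : Set (Completion Ω))
  have := hnice.locallyCompact
  have hD : 0 < D := (deltaOmega_pos hnice.nonComplete x).trans_le
    (deltaOmega_le_diam hnice.nonComplete x)
  have hle : ENNReal.ofReal (1 / D) * edist x y ≤ qhEDist x y := by
    refine le_iInf fun γ => le_iInf fun a => le_iInf fun b => le_iInf fun hc => ?_
    have hedist : edist x y ≤ eVariationOn γ (Icc a b) := by
      simpa only [hc.2.2.1, hc.2.2.2.1] using
        eVariationOn.edist_le γ (left_mem_Icc.2 hc.1) (right_mem_Icc.2 hc.1)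
    exact (mul_le_mul_right hedist _).trans <| le_qhLength_of_deltaOmega_le fun t _ =>
      ⟨deltaOmega_pos hnice.nonComplete (γ t), deltaOmega_le_diam hnice.nonComplete (γ t)⟩
  have h := ENNReal.toReal_mono (hnice.qhEDist_ne_top x y) hle
  rw [ENNReal.toReal_mul, ENNReal.toReal_ofReal (by positivity), edist_dist,
    ENNReal.toReal_ofReal dist_nonneg, one_div_mul_eq_div, div_le_iff₀ hD] at h
  rw [mul_comm]
  exact h

theorem tendsto_coe_of_tendsto_qhDist (hnice : MinimallyNice Ω) [CompactSpace (Completion Ω)]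
    {ι : Type*} {l : Filter ι} {x : ι → Ω} {y : Ω}
    (h : Tendsto (fun i => qhDist (x i) y) l (𝓝 0)) :
    Tendsto (fun i => (x i : Completion Ω)) l (𝓝 y) := by
  rw [tendsto_iff_dist_tendsto_zero]
  refine squeeze_zero (fun _ => dist_nonneg)
    (fun i => (Completion.dist_eq (x i) y).trans_le (hnice.dist_le_diam_mul_qhDist (x i) y)) ?_
  simpa only [mul_zero] using h.const_mul _

theorem exists_short_curve (hnice : MinimallyNice Ω) (z : Ω) {ρ : ℝ} (hρ : 0 < ρ) :
    ∃ r > 0, ∀ w : Ω, dist w z < r → ∃ (σ : ℝ → Ω) (a b : ℝ), IsCurveIn σ a b z w ∧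
      eVariationOn σ (Icc a b) ≤ ENNReal.ofReal ρ ∧ ∀ t ∈ Icc a b, dist (σ t) z ≤ ρ := by
  obtain ⟨r, hr, hball⟩ := Metric.mem_nhds_iff.1 <|
    hnice.idContinuous z (Iio_mem_nhds (ENNReal.ofReal_pos.2 hρ))
  refine ⟨r, hr, fun w hw => ?_⟩
  obtain ⟨σ, a, b, hc, hvar⟩ : ∃ (σ : ℝ → Ω) (a b : ℝ), IsCurveIn σ a b z w ∧
      eVariationOn σ (Icc a b) < ENNReal.ofReal ρ := by
    simpa only [innerEDist, iInf_lt_iff, exists_prop, mem_preimage, mem_Iio] using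
      hball (mem_ball.2 hw)
  refine ⟨σ, a, b, hc, hvar.le, fun t ht => ?_⟩
  have h := eVariationOn.edist_le σ ht (left_mem_Icc.2 hc.1)
  rw [hc.2.2.1] at h
  exact (edist_le_ofReal hρ.le).1 (h.trans hvar.le)

theorem exists_qhDist_le_of_dist_lt (hnice : MinimallyNice Ω) (x₀ z : Ω) :
    ∃ r > 0, ∃ B : ℝ, ∀ w : Ω, dist w z < r → qhDist x₀ w ≤ B := by
  have := hnice.locallyCompact
  obtain ⟨σ₀, a₀, b₀, hc₀⟩ := hnice.rectifiablyConnected x₀ z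
  obtain ⟨m₀, hm₀, hδ₀⟩ := hc₀.exists_pos_le_deltaOmega hnice.nonComplete
  set ρ := deltaOmega z / 2 with hρdef
  have hρ : 0 < ρ := half_pos (deltaOmega_pos hnice.nonComplete z)
  obtain ⟨r, hr, hshort⟩ := hnice.exists_short_curve z hρ
  refine ⟨r, hr, ((eVariationOn σ₀ (Icc a₀ b₀)).toReal + ρ) / min m₀ ρ, fun w hw => ?_⟩
  obtain ⟨σ, a, b, hc, hvar, hnear⟩ := hshort w hw
  obtain ⟨τ, A, B, hcτ, hvarτ, himage⟩ := hc₀.exists_append hc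
  have hδτ : ∀ t ∈ Icc A B, min m₀ ρ ≤ deltaOmega (τ t) := by
    intro t ht
    rcases himage (mem_image_of_mem τ ht) with ⟨s, hs, hst⟩ | ⟨s, hs, hst⟩
    · exact hst ▸ (min_le_left _ _).trans (hδ₀ s hs)
    · have := deltaOmega_le_add_dist z (σ s)
      have := hnear s hs
      rw [dist_comm] at this
      exact hst ▸ (min_le_right _ _).trans (by linarith [hρdef])
  refine (hcτ.qhDist_le (lt_min hm₀ hρ) hδτ).trans (div_le_div_of_nonneg_right ?_ (by positivity))
  rw [hvarτ, ENNReal.toReal_add hc₀.2.2.2.2 hc.2.2.2.2]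
  gcongr
  exact ENNReal.toReal_le_of_le_ofReal hρ.le hvar

theorem exists_qhDist_le_of_isCompact (hnice : MinimallyNice Ω) (x₀ : Ω) {K : Set Ω}
    (hK : IsCompact K) : ∃ B : ℝ, ∀ w ∈ K, qhDist x₀ w ≤ B := by
  choose r hr B hB using hnice.exists_qhDist_le_of_dist_lt x₀
  obtain ⟨t, -, hcover⟩ := hK.elim_nhds_subcover (fun z => ball z (r z))
    fun z _ => ball_mem_nhds z (hr z)
  obtain ⟨M, hM⟩ := (t.finite_toSet.image B).bddAbove
  refine ⟨M, fun w hw => ?_⟩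
  obtain ⟨z, hz, hwz⟩ := mem_iUnion₂.1 (hcover hw)
  exact (hB z w hwz).trans (hM (mem_image_of_mem B hz))

end MinimallyNice

namespace IsQHGeodesicRay

variable {γ : ℝ → Ω}

theorem qhDist_zero (hγ : IsQHGeodesicRay γ) {u : ℝ} (hu : 0 ≤ u) : qhDist (γ 0) (γ u) = u := by
  rw [hγ self_mem_Ici hu, zero_sub, abs_neg, abs_of_nonneg hu]

theorem isQHGeodesicSeg (hγ : IsQHGeodesicRay γ) {a b : ℝ} (ha : 0 ≤ a) (hab : a ≤ b) :
    IsQHGeodesicSeg γ a b (γ a) (γ b) :=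
  ⟨hab, rfl, rfl, fun _ hu _ hv => hγ (ha.trans hu.1) (ha.trans hv.1)⟩

theorem mem_metricBoundary_of_mapClusterPt (hnice : MinimallyNice Ω) (hγ : IsQHGeodesicRay γ)
    {p : Completion Ω} (hp : MapClusterPt p atTop fun t => (γ t : Completion Ω)) :
    p ∈ metricBoundary Ω := by
  rintro ⟨z, rfl⟩
  obtain ⟨r, hr, B, hB⟩ := hnice.exists_qhDist_le_of_dist_lt (γ 0) z
  obtain ⟨t, ht, htz⟩ := frequently_atTop.1 (hp.frequently (ball_mem_nhds _ hr)) (max B 0 + 1)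
  rw [Completion.dist_eq] at htz
  have := hB _ htz
  rw [hγ.qhDist_zero (by linarith [le_max_right B 0])] at this
  linarith [le_max_left B 0]

end IsQHGeodesicRay

theorem QHVisible.eq_of_forall_exists_segment (hvis : QHVisible Ω) (hnice : MinimallyNice Ω)
    {p q : Completion Ω} (hp : p ∈ metricBoundary Ω) (hq : q ∈ metricBoundary Ω)
    {ι : Type*} {x₀ : Ω} {σ : ι → ℝ → Ω} (hσ : ∀ i, IsQHGeodesicRay (σ i) ∧ σ i 0 = x₀)
    (h : ∀ ε > 0, ∀ T : ℝ, ∃ i a t, T ≤ a ∧ a ≤ t ∧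
      dist (σ i a : Completion Ω) p < ε ∧ dist (σ i t : Completion Ω) q < ε) :
    p = q := by
  by_contra hpq
  obtain ⟨K, hK, hKvis⟩ := hvis p q hp hq hpq
  obtain ⟨B, hB⟩ := hnice.exists_qhDist_le_of_isCompact x₀ hK
  choose i a t hna hat hap htq using fun n : ℕ => h (1 / (n + 1)) Nat.one_div_pos_of_nat n
  have tendsto_of_dist_lt {x : ℕ → Completion Ω} {y : Completion Ω}
      (hxy : ∀ n, dist (x n) y < 1 / (n + 1)) : Tendsto x atTop (𝓝 y) :=
    tendsto_iff_dist_tendsto_zero.2 <| squeeze_zero (fun _ => dist_nonneg) (fun n => (hxy n).le)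
      tendsto_one_div_add_atTop_nhds_zero_nat
  obtain ⟨n, hn⟩ := exists_nat_gt B
  have ha : 0 ≤ a n := n.cast_nonneg.trans (hna n)
  obtain ⟨u, hu, huK⟩ := hKvis _ _ (tendsto_of_dist_lt hap) (tendsto_of_dist_lt htq) n _ _ _
    ((hσ (i n)).1.isQHGeodesicSeg ha (hat n))
  have := hB _ huK
  rw [← (hσ (i n)).2, (hσ (i n)).1.qhDist_zero (ha.trans hu.1)] at this
  linarith [hna n, hu.1]

theorem IsQHGeodesicRay.exists_tendsto_metricBoundary (hnice : MinimallyNice Ω)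
    [CompactSpace (Completion Ω)] (hvis : QHVisible Ω) {γ : ℝ → Ω} (hγ : IsQHGeodesicRay γ) :
    ∃ p ∈ metricBoundary Ω, Tendsto (fun t => (γ t : Completion Ω)) atTop (𝓝 p) := by
  obtain ⟨p, hp⟩ := exists_clusterPt_of_compactSpace (map (fun t => (γ t : Completion Ω)) atTop)
  have hpb := hγ.mem_metricBoundary_of_mapClusterPt hnice hp
  refine ⟨p, hpb, tendsto_nhds_of_unique_mapClusterPt fun q hq => ?_⟩
  refine (hvis.eq_of_forall_exists_segment hnice hpb
    (hγ.mem_metricBoundary_of_mapClusterPt hnice hq) (σ := fun _ : Unit => γ)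
    (fun _ => ⟨hγ, rfl⟩) fun ε hε T => ?_).symm
  obtain ⟨a, hTa, ha⟩ := frequently_atTop.1 (hp.frequently (ball_mem_nhds p hε)) T
  obtain ⟨t, hat, ht⟩ := frequently_atTop.1 (hq.frequently (ball_mem_nhds q hε)) a
  exact ⟨(), a, t, hTa, hat, ha, ht⟩

theorem tendsto_qhDist_of_forall_Icc {ι : Type*} {l : Filter ι} {σ : ι → ℝ → Ω} {γ : ℝ → Ω}
    (h : ∀ C > (0 : ℝ), ∀ ε > (0 : ℝ), ∀ᶠ i in l, ∀ t ∈ Icc 0 C, qhDist (σ i t) (γ t) < ε)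
    {a : ℝ} (ha : 0 ≤ a) : Tendsto (fun i => qhDist (σ i a) (γ a)) l (𝓝 0) :=
  tendsto_order.2 ⟨fun _ hε => Eventually.of_forall fun _ => hε.trans_le ENNReal.toReal_nonneg,
    fun ε hε => (h (a + 1) (by linarith) ε hε).mono fun _ hi => hi a ⟨ha, by linarith⟩⟩

theorem landing_point_continuous_rays_general
    {Ω : Type*} [MetricSpace Ω]
    (hnice : MinimallyNice Ω)
    (hcpt : CompactSpace (UniformSpace.Completion Ω))
    (hvis : QHVisible Ω)
    (x₀ : Ω) (γseq : ℕ → ℝ → Ω) (γ : ℝ → Ω)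
    (hn : ∀ n, IsQHGeodesicRay (γseq n) ∧ γseq n 0 = x₀)
    (hγ : IsQHGeodesicRay γ)
    (hconv : ∀ C > (0:ℝ), ∀ ε > (0:ℝ), ∀ᶠ n in Filter.atTop,
      ∀ t ∈ Set.Icc 0 C, qhDist (γseq n t) (γ t) < ε) :
    ∃ (p : UniformSpace.Completion Ω) (q : ℕ → UniformSpace.Completion Ω),
      (∀ n, Filter.Tendsto (fun t : ℝ => ((γseq n t : Ω) : UniformSpace.Completion Ω))
        Filter.atTop (nhds (q n))) ∧
      Filter.Tendsto (fun t : ℝ => ((γ t : Ω) : UniformSpace.Completion Ω))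
        Filter.atTop (nhds p) ∧
      Filter.Tendsto q Filter.atTop (nhds p) := by
  have := hnice.locallyCompact
  obtain ⟨p, hpb, hpt⟩ := hγ.exists_tendsto_metricBoundary hnice hvis
  choose q hqb hqt using fun n => (hn n).1.exists_tendsto_metricBoundary hnice hvis
  refine ⟨p, q, hqt, hpt, tendsto_nhds_of_unique_mapClusterPt fun q' hq' => ?_⟩
  have hq'b := isClosed_metricBoundary.mem_of_mapClusterPt hq' (Eventually.of_forall hqb)
  refine (hvis.eq_of_forall_exists_segment hnice hpb hq'b hn fun ε hε T => ?_).symm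
  have hε2 := half_pos hε
  obtain ⟨a, hap, ha⟩ :=
    ((hpt.eventually (ball_mem_nhds p hε2)).and (eventually_ge_atTop (max T 0))).exists
  have hγseq_a : Tendsto (fun n => (γseq n a : Completion Ω)) atTop (𝓝 (γ a)) :=
    hnice.tendsto_coe_of_tendsto_qhDist
      (tendsto_qhDist_of_forall_Icc hconv ((le_max_right T 0).trans ha))
  obtain ⟨n, hna, hnq⟩ := ((hγseq_a.eventually (ball_mem_nhds _ hε2)).and_frequently
    (hq'.frequently (ball_mem_nhds q' hε2))).exists
  obtain ⟨t, htq, hat⟩ :=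
    (((hqt n).eventually (ball_mem_nhds _ hε2)).and (eventually_ge_atTop a)).exists
  exact ⟨n, a, t, (le_max_left T 0).trans ha, hat,
    (dist_triangle _ _ _).trans_lt (add_halves ε ▸ add_lt_add hna hap),
    (dist_triangle _ _ _).trans_lt (add_halves ε ▸ add_lt_add htq hnq)⟩

/-- **Lemma 4.5 (i).**  Let `(Ω,d)` be a bounded minimally nice, quasihyperbolically visible
space with compact metric completion, `x₀ ∈ Ω`, and let `γₙ` be quasihyperbolic geodesic rays
with `γₙ(0) = x₀` converging, uniformly (w.r.t. `k_Ω`) on compact subsets of `[0,∞)`, to a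
quasihyperbolic geodesic ray `γ`.  Then `lim_{t→∞} γ(t) = lim_{n→∞} lim_{t→∞} γₙ(t)` in the
metric `d`. -/
theorem landing_point_continuous_rays
    {Ω : Type*} [MetricSpace Ω]
    (hnice : MinimallyNice Ω)
    (hbdd : Bornology.IsBounded (Set.univ : Set Ω))
    (hcpt : CompactSpace (UniformSpace.Completion Ω))
    (hvis : QHVisible Ω)
    (x₀ : Ω) (γseq : ℕ → ℝ → Ω) (γ : ℝ → Ω)
    (hn : ∀ n, IsQHGeodesicRay (γseq n) ∧ γseq n 0 = x₀)
    (hγ : IsQHGeodesicRay γ)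
    (hconv : ∀ C > (0:ℝ), ∀ ε > (0:ℝ), ∀ᶠ n in Filter.atTop,
      ∀ t ∈ Set.Icc 0 C, qhDist (γseq n t) (γ t) < ε) :
    ∃ (p : UniformSpace.Completion Ω) (q : ℕ → UniformSpace.Completion Ω),
      (∀ n, Filter.Tendsto (fun t : ℝ => ((γseq n t : Ω) : UniformSpace.Completion Ω))
        Filter.atTop (nhds (q n))) ∧
      Filter.Tendsto (fun t : ℝ => ((γ t : Ω) : UniformSpace.Completion Ω))
        Filter.atTop (nhds p) ∧
      Filter.Tendsto q Filter.atTop (nhds p) :=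
  landing_point_continuous_rays_general hnice hcpt hvis x₀ γseq γ hn hγ hconv
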